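/- arXiv:1808.00148 — 2 statements merged into one kernel-verified Lean document; each statement's English description precedes it below -/
import Mathlib

section
/- (Lemma on null vectors of Veronese images) Let n ≥ d > 0 and let IV_{d,s} = {x ∈ ℤ^d_{≥0} : x₁+⋯+x_d = s}. Let P be a matrix with rows indexed by IV_{d,n-d} and d columns, such that (a) the (x,j)-entry of P is zero whenever x_j = 0, and (b) for every y ∈ IV_{d,n-d-1}, the entries (y+e_j, j) for 1 ≤ j ≤ d all equal a common value c_y. Let Q be an antisymmetric d×d matrix. Then for every v ∈ ℝ^d, the inner product ⟨Pv, ν_{n-d}(Qv)⟩ = 0, where ν_{n-d}(w) is the vector (w^x)_{x ∈ IV_{d,n-d}} with w^x = w₁^{x₁}⋯w_d^{x_d}. -/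
open Matrix Finset

lemma reindex_aux (d t : ℕ) (j : Fin d) (f : (Fin d → ℕ) → ℝ)
    (hf : ∀ x ∈ Finset.Nat.antidiagonalTuple d (t+1), x j = 0 → f x = 0) :
    ∑ x ∈ Finset.Nat.antidiagonalTuple d (t+1), f x
      = ∑ y ∈ Finset.Nat.antidiagonalTuple d t, f (y + Pi.single j 1) := by
  rw [← Finset.sum_filter_of_ne (p := fun x => x j ≠ 0)
    (fun x hx hfx => fun h0 => hfx (hf x hx h0))]
  refine Finset.sum_bij' (fun (x : Fin d → ℕ) (_ : x ∈ _) => x - Pi.single j 1)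
    (fun (y : Fin d → ℕ) (_ : y ∈ _) => y + Pi.single j 1) ?_ ?_ ?_ ?_ ?_
  · intro x hx
    simp only [Finset.mem_filter, Finset.Nat.mem_antidiagonalTuple] at hx ⊢
    obtain ⟨hsum, hj⟩ := hx
    have happ : ∀ k, (x - Pi.single j 1 : Fin d → ℕ) k = x k - (Pi.single j 1 : Fin d → ℕ) k :=
      fun k => rfl
    have hs : ∑ k, (x - Pi.single j 1 : Fin d → ℕ) k + ∑ k, (Pi.single j 1 : Fin d → ℕ) k
        = ∑ k, x k := by
      rw [← Finset.sum_add_distrib]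
      apply Finset.sum_congr rfl
      intro k _
      rcases eq_or_ne k j with rfl | hk
      · simp only [happ, Pi.single_eq_same]
        omega
      · simp [happ, Pi.single_eq_of_ne hk]
    rw [Finset.sum_pi_single'] at hs
    simp only [Finset.mem_univ, if_true] at hs
    omega
  · intro y hy
    simp only [Finset.Nat.mem_antidiagonalTuple] at hy
    simp only [Finset.mem_filter, Finset.Nat.mem_antidiagonalTuple]
    constructor
    · simp only [Pi.add_apply]
      rw [Finset.sum_add_distrib, hy, Finset.sum_pi_single']
      simp
    · simp
  · intro x hx
    simp only [Finset.mem_filter] at hx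
    funext k
    rcases eq_or_ne k j with rfl | hk
    · have := hx.2
      simp only [Pi.add_apply, Pi.sub_apply, Pi.single_eq_same]
      omega
    · simp [Pi.single_eq_of_ne hk]
  · intro y _
    funext k
    rcases eq_or_ne k j with rfl | hk
    · simp
    · simp [Pi.single_eq_of_ne hk]
  · intro x hx
    simp only [Finset.mem_filter] at hx
    have heq : (x - Pi.single j 1 : Fin d → ℕ) + Pi.single j 1 = x := by
      funext k
      rcases eq_or_ne k j with rfl | hk
      · have := hx.2
        simp only [Pi.add_apply, Pi.sub_apply, Pi.single_eq_same]
        omega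
      · simp [Pi.single_eq_of_ne hk]
    simp only [heq]

theorem null_vector_veronese (d s : ℕ) (hd : 0 < d)
    (P : (Fin d → ℕ) → (Fin d → ℝ))
    (hP0 : ∀ x : Fin d → ℕ, (∑ i, x i) = s → ∀ j, x j = 0 → P x j = 0)
    (hPc : ∀ (y : Fin d → ℕ), (∑ i, y i) + 1 = s →
      ∃ cy : ℝ, ∀ j : Fin d, P (y + Pi.single j 1) j = cy)
    (Q : Matrix (Fin d) (Fin d) ℝ) (hQ : Qᵀ = -Q) (v : Fin d → ℝ) :
    ∑ x ∈ Finset.Nat.antidiagonalTuple d s,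
      (P x ⬝ᵥ v) * ∏ j, (Q.mulVec v) j ^ x j = 0 := by
  set w := Q.mulVec v with hwdef
  have hvw : (∑ j, v j * w j) = 0 := by
    have h1 : v ⬝ᵥ Q.mulVec v = Q.vecMul v ⬝ᵥ v := Matrix.dotProduct_mulVec v Q v
    have h2 : Q.vecMul v = (Qᵀ).mulVec v := (Matrix.mulVec_transpose Q v).symm
    rw [hQ] at h2
    have h3 : v ⬝ᵥ Q.mulVec v = -(Q.mulVec v ⬝ᵥ v) := by
      rw [h1, h2, Matrix.neg_mulVec, neg_dotProduct]
    rw [dotProduct_comm] at h3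
    have h4' : Q.mulVec v ⬝ᵥ v = 0 := by linarith
    have h4 : v ⬝ᵥ Q.mulVec v = 0 := by rwa [dotProduct_comm]
    simpa [dotProduct] using h4
  rcases s with _ | t
  · apply Finset.sum_eq_zero
    intro x hx
    rw [Finset.Nat.mem_antidiagonalTuple] at hx
    have hx0 : ∀ j, x j = 0 := fun j =>
      Finset.sum_eq_zero_iff.mp hx j (Finset.mem_univ j)
    have : P x ⬝ᵥ v = 0 := by
      apply Finset.sum_eq_zero
      intro j _
      rw [hP0 x hx j (hx0 j), zero_mul]
    rw [this, zero_mul]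
  · have key : ∀ x ∈ Finset.Nat.antidiagonalTuple d (t+1),
        (P x ⬝ᵥ v) * ∏ j, w j ^ x j = ∑ j, P x j * v j * ∏ k, w k ^ x k := by
      intro x _
      rw [dotProduct, Finset.sum_mul]
    rw [Finset.sum_congr rfl key, Finset.sum_comm]
    have step : ∀ j : Fin d,
        ∑ x ∈ Finset.Nat.antidiagonalTuple d (t+1), P x j * v j * ∏ k, w k ^ x k
          = ∑ y ∈ Finset.Nat.antidiagonalTuple d t,
              P (y + Pi.single j 1) j * v j * (w j * ∏ k, w k ^ y k) := by
      intro j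
      rw [reindex_aux d t j _ (by
        intro x hx hxj
        rw [Finset.Nat.mem_antidiagonalTuple] at hx
        rw [hP0 x hx j hxj, zero_mul, zero_mul])]
      apply Finset.sum_congr rfl
      intro y _
      congr 1
      have hprod : ∏ k, w k ^ ((y + Pi.single j 1 : Fin d → ℕ)) k
          = (∏ k, w k ^ y k) * ∏ k, w k ^ (Pi.single j 1 : Fin d → ℕ) k := by
        rw [← Finset.prod_mul_distrib]
        apply Finset.prod_congr rfl
        intro k _
        rw [Pi.add_apply, pow_add]
      rw [hprod, mul_comm]
      congr 1
      rw [Finset.prod_eq_single j (fun k _ hk => by simp [Pi.single_eq_of_ne hk])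
        (fun h => absurd (Finset.mem_univ j) h)]
      simp
    rw [Finset.sum_congr rfl (fun j _ => step j), Finset.sum_comm]
    apply Finset.sum_eq_zero
    intro y hy
    rw [Finset.Nat.mem_antidiagonalTuple] at hy
    obtain ⟨cy, hc⟩ := hPc y (by omega)
    have : ∀ j : Fin d, P (y + Pi.single j 1) j * v j * (w j * ∏ k, w k ^ y k)
        = (v j * w j) * (cy * ∏ k, w k ^ y k) := fun j => by rw [hc j]; ring
    rw [Finset.sum_congr rfl (fun j _ => this j), ← Finset.sum_mul, hvw, zero_mul]
end

section
/- Under the hypotheses of the preceding lemma construction: let F = {v₁,…,v_{n-d}} ⊂ ℝ^d and D a (d-1)-subset of ℝ^d with F ∩ D ≠ ∅. Define F⁺ ∈ ℝ^{|IV_{d,n-d}|} by F⁺_x = Σ_{k ∈ {1,…,d}^{n-d}, σ(k)=x} Π_{i=1}^{n-d} (v_i)_{k_i}, where σ(k) = Σ_i e_{k_i}. Then ⟨F⁺, ν_{n-d}(D*)⟩ = 0, where D* is the generalized cross product of the elements of D. -/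
open Matrix Finset

theorem Fplus_null_vector (m s : ℕ)
    (D : Fin m → (Fin (m + 1) → ℝ)) (F : Fin s → (Fin (m + 1) → ℝ))
    (hmeet : ∃ i j, F i = D j)
    (Dstar : Fin (m + 1) → ℝ)
    (hDstar : ∀ v : Fin (m + 1) → ℝ,
      Dstar ⬝ᵥ v = Matrix.det (Matrix.of fun a b =>
        (Fin.snoc D v : Fin (m + 1) → Fin (m + 1) → ℝ) b a)) :
    ∑ x ∈ Finset.Nat.antidiagonalTuple (m + 1) s,
      (∑ k ∈ Finset.univ.filter
          (fun k : Fin s → Fin (m + 1) =>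
            (∑ i, Pi.single (k i) (1 : ℕ)) = x),
        ∏ i, F i (k i)) * ∏ j, Dstar j ^ x j = 0 := by
  obtain ⟨i₀, j₀, hF⟩ := hmeet
  have h1 : ∀ k : Fin s → Fin (m + 1),
      (∑ i, Pi.single (k i) (1 : ℕ)) ∈ Finset.Nat.antidiagonalTuple (m + 1) s := by
    intro k
    rw [Finset.Nat.mem_antidiagonalTuple]
    simp_rw [Finset.sum_apply, Pi.single_apply]
    rw [Finset.sum_comm]
    simp
  have hprod : ∀ k : Fin s → Fin (m + 1),
      (∏ j, Dstar j ^ ((∑ i, Pi.single (k i) (1 : ℕ) : Fin (m + 1) → ℕ)) j) = ∏ i, Dstar (k i) := by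
    intro k
    calc ∏ j, Dstar j ^ ((∑ i, Pi.single (k i) (1 : ℕ) : Fin (m + 1) → ℕ)) j
        = ∏ j, ∏ i, Dstar j ^ ((Pi.single (k i) (1 : ℕ) : Fin (m + 1) → ℕ) j) := by
          refine Finset.prod_congr rfl fun j _ => ?_
          rw [Finset.sum_apply, ← Finset.prod_pow_eq_pow_sum]
      _ = ∏ i, ∏ j, Dstar j ^ ((Pi.single (k i) (1 : ℕ) : Fin (m + 1) → ℕ) j) := Finset.prod_comm
      _ = ∏ i, Dstar (k i) := by
          refine Finset.prod_congr rfl fun i _ => ?_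
          simp [Pi.single_apply, pow_ite]
  have key : (∑ x ∈ Finset.Nat.antidiagonalTuple (m + 1) s,
      (∑ k ∈ Finset.univ.filter
          (fun k : Fin s → Fin (m + 1) =>
            (∑ i, Pi.single (k i) (1 : ℕ)) = x),
        ∏ i, F i (k i)) * ∏ j, Dstar j ^ x j)
      = ∏ i, ∑ j, F i j * Dstar j := by
    have step : ∀ x ∈ Finset.Nat.antidiagonalTuple (m + 1) s,
        ((∑ k ∈ Finset.univ.filter
          (fun k : Fin s → Fin (m + 1) =>
            (∑ i, Pi.single (k i) (1 : ℕ)) = x),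
        ∏ i, F i (k i)) * ∏ j, Dstar j ^ x j)
        = ∑ k ∈ Finset.univ.filter
          (fun k : Fin s → Fin (m + 1) =>
            (∑ i, Pi.single (k i) (1 : ℕ)) = x),
          ∏ i, (F i (k i) * Dstar (k i)) := by
      intro x hx
      rw [Finset.sum_mul]
      refine Finset.sum_congr rfl fun k hk => ?_
      rw [← (Finset.mem_filter.mp hk).2, Finset.prod_mul_distrib, hprod]
    rw [Finset.sum_congr rfl step,
      Finset.sum_fiberwise_of_maps_to (fun k _ => h1 k),
      Finset.prod_univ_sum]
    simp_rw [Finset.prod_mul_distrib]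
    rw [Fintype.piFinset_univ]
  rw [key]
  refine Finset.prod_eq_zero (Finset.mem_univ i₀) ?_
  have : ∑ j, F i₀ j * Dstar j = Dstar ⬝ᵥ F i₀ := by
    simp [dotProduct, mul_comm]
  rw [this, hDstar, hF]
  rw [show (Matrix.of fun a b => (Fin.snoc D (D j₀) : Fin (m + 1) → Fin (m + 1) → ℝ) b a)
      = (Matrix.of (Fin.snoc D (D j₀) : Fin (m + 1) → Fin (m + 1) → ℝ))ᵀ from rfl,
    Matrix.det_transpose]
  apply Matrix.det_zero_of_row_eq (i := Fin.castSucc j₀) (j := Fin.last m)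
  · exact Fin.ne_of_lt (Fin.castSucc_lt_last j₀)
  · show (Fin.snoc D (D j₀) : Fin (m + 1) → Fin (m + 1) → ℝ) (Fin.castSucc j₀)
        = (Fin.snoc D (D j₀) : Fin (m + 1) → Fin (m + 1) → ℝ) (Fin.last m)
    simp
end
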